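/- Let p : ℂ² → [0,∞) be Lebesgue measurable and Lebesgue integrable. Then p is invariant almost everywhere under SU(2) transformations (i.e. for every U ∈ SU(2) there is a Lebesgue null set N_U ⊆ ℂ² with p(U w) = p(w) for all w ∉ N_U) if and only if there exists a measurable function f : [0,∞) → [0,∞) such that p(w) = f(‖w‖) for Lebesgue-almost every w ∈ ℂ². -/

import Mathlib

/-!
Averaging `p` over `SU(2)` against the Haar probability measure gives a function `q` that is
invariant under every `U ∈ SU(2)`, and by Fubini `q = p` almost everywhere as soon as each
`p ∘ U = p` almost everywhere. Since `SU(2)` acts transitively on each sphere `‖w‖ = l`, every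
invariant function is a function of `‖w‖`. Conversely, each `U` is a linear automorphism of `ℝ⁴`,
so it maps null sets to null sets and preserves `‖w‖`, which makes any a.e. radial `p` a.e.
invariant.
-/

open MeasureTheory Real Set

noncomputable section

/-- `SU(2)`: 2×2 complex unitary matrices with determinant 1. -/
abbrev SU2 := Matrix.specialUnitaryGroup (Fin 2) ℂ

/-- Action of `SU(2)` on `ℂ²` by matrix–vector multiplication. -/
def su2Smul (U : SU2) (w : ℂ × ℂ) : ℂ × ℂ :=
  ((U : Matrix (Fin 2) (Fin 2) ℂ) 0 0 * w.1 + (U : Matrix (Fin 2) (Fin 2) ℂ) 0 1 * w.2,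
   (U : Matrix (Fin 2) (Fin 2) ℂ) 1 0 * w.1 + (U : Matrix (Fin 2) (Fin 2) ℂ) 1 1 * w.2)

/-- The Euclidean norm `‖w‖ = √(|α|² + |β|²)` of `w = (α, β) ∈ ℂ²`. -/
def cnorm (w : ℂ × ℂ) : ℝ := Real.sqrt (‖w.1‖ ^ 2 + ‖w.2‖ ^ 2)

open scoped ENNReal ComplexConjugate

section OrbitAverage

variable {G X : Type*} [Group G] [MeasurableSpace G] [MulAction G X]

def orbitAverage (ν : Measure G) (p : X → ℝ≥0∞) (x : X) : ℝ≥0∞ := ∫⁻ g, p (g⁻¹ • x) ∂ν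

lemma measurable_orbitAverage [MeasurableInv G] [MeasurableSpace X] [MeasurableSMul₂ G X]
    (ν : Measure G) [SFinite ν] {p : X → ℝ≥0∞} (hp : Measurable p) :
    Measurable (orbitAverage ν p) :=
  (hp.comp (measurable_fst.inv.smul measurable_snd)).lintegral_prod_left'

lemma orbitAverage_smul [MeasurableMul G] (ν : Measure G) [ν.IsMulLeftInvariant]
    (p : X → ℝ≥0∞) (g : G) (x : X) : orbitAverage ν p (g • x) = orbitAverage ν p x := by
  have hsmul (k : G) : k⁻¹ • g • x = (g⁻¹ * k)⁻¹ • x := by rw [smul_smul, mul_inv_rev, inv_inv]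
  simp only [orbitAverage, hsmul]
  exact lintegral_mul_left_eq_self (fun k => p (k⁻¹ • x)) g⁻¹

lemma orbitAverage_ae_eq [MeasurableInv G] [MeasurableSpace X] [MeasurableSMul₂ G X]
    (ν : Measure G) [IsProbabilityMeasure ν] {μ : Measure X} [SFinite μ] {p : X → ℝ≥0∞}
    (hp : Measurable p) (hinv : ∀ g : G, ∀ᵐ x ∂μ, p (g • x) = p x) :
    orbitAverage ν p =ᵐ[μ] p := by
  have hinv' : ∀ᵐ x ∂μ, ∀ᵐ g ∂ν, p (g⁻¹ • x) = p x := by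
    refine (Measure.ae_ae_comm (p := fun x (g : G) => p (g⁻¹ • x) = p x) ?_).mpr
      (Filter.Eventually.of_forall fun g => hinv g⁻¹)
    exact measurableSet_eq_fun (hp.comp (measurable_snd.inv.smul measurable_fst))
      (hp.comp measurable_fst)
  filter_upwards [hinv'] with x hx
  rw [orbitAverage, lintegral_congr_ae hx, lintegral_const, measure_univ, mul_one]

end OrbitAverage

instance {G : Type*} [Group G] [TopologicalSpace G] [MeasurableSpace G] [BorelSpace G]
    [IsTopologicalGroup G] [CompactSpace G] :
    IsProbabilityMeasure (Measure.haarMeasure (⊤ : TopologicalSpace.PositiveCompacts G)) :=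
  ⟨by simpa using Measure.haarMeasure_self (K₀ := (⊤ : TopologicalSpace.PositiveCompacts G))⟩

lemma DistribMulAction.quasiMeasurePreserving_smul {G E : Type*} [Group G] [NormedAddCommGroup E]
    [NormedSpace ℝ E] [FiniteDimensional ℝ E] [MeasurableSpace E] [BorelSpace E]
    (μ : Measure E) [μ.IsAddHaarMeasure] [DistribMulAction G E] [SMulCommClass G ℝ E] (g : G) :
    Measure.QuasiMeasurePreserving (g • · : E → E) μ μ :=
  Measure.LinearMap.quasiMeasurePreserving μ (DistribMulAction.toLinearEquiv ℝ E g).toLinearMap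
    (LinearEquiv.isUnit_det' _).ne_zero

lemma MeasureTheory.Measure.QuasiMeasurePreserving.ae_apply_eq_of_ae_eq_comp {X Y Z : Type*}
    [MeasurableSpace X] {μ : Measure X} {T : X → X} (hT : Measure.QuasiMeasurePreserving T μ μ)
    {r : X → Y} (hr : ∀ x, r (T x) = r x) {p : X → Z} {f : Y → Z}
    (hp : ∀ᵐ x ∂μ, p x = f (r x)) : ∀ᵐ x ∂μ, p (T x) = p x := by
  filter_upwards [hT.ae_eq_comp (g' := f ∘ r) hp, hp] with x hTx hx
  simp only [Function.comp_apply, hr] at hTx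
  rw [hTx, hx]

namespace Matrix

variable {n 𝕜 : Type*} [Fintype n] [DecidableEq n]

instance [CommRing 𝕜] [StarRing 𝕜] [TopologicalSpace 𝕜] [IsTopologicalRing 𝕜]
    [ContinuousStar 𝕜] : IsTopologicalGroup (specialUnitaryGroup n 𝕜) where
  continuous_inv := continuous_induced_rng.mpr continuous_subtype_val.star

lemma isClosed_specialUnitaryGroup [CommRing 𝕜] [StarRing 𝕜] [TopologicalSpace 𝕜]
    [IsTopologicalRing 𝕜] [ContinuousStar 𝕜] [T1Space 𝕜] :
    IsClosed (specialUnitaryGroup n 𝕜 : Set (Matrix n n 𝕜)) :=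
  isClosed_unitary.inter (isClosed_singleton.preimage (continuous_id.matrix_det (R := 𝕜)))

instance [RCLike 𝕜] : CompactSpace (specialUnitaryGroup n 𝕜) := by
  refine isCompact_iff_compactSpace.mp <|
    (isCompact_univ_pi fun _ => isCompact_univ_pi fun _ => isCompact_closedBall (0 : 𝕜) 1)
      |>.of_isClosed_subset isClosed_specialUnitaryGroup fun U hU => ?_
  simpa [Set.mem_univ_pi] using fun i j => entry_norm_bound_of_unitary hU.1 i j

lemma mem_specialUnitaryGroup_fin_two_of_normSq_add_normSq_eq_one {a b : ℂ}
    (h : Complex.normSq a + Complex.normSq b = 1) :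
    !![a, -conj b; b, conj a] ∈ specialUnitaryGroup (Fin 2) ℂ := by
  have h' : conj a * a + conj b * b = 1 := by
    rw [mul_comm (conj a), mul_comm (conj b), Complex.mul_conj, Complex.mul_conj]
    exact_mod_cast h
  refine mem_specialUnitaryGroup_iff.mpr ⟨mem_unitaryGroup_iff'.mpr ?_, ?_⟩
  · ext i j
    fin_cases i <;> fin_cases j <;> simp [mul_apply] <;> first | ring1 | linear_combination h'
  · rw [det_fin_two_of]
    linear_combination h'

end Matrix

instance : Measure.IsAddHaarMeasure (volume : Measure (ℂ × ℂ)) :=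
  Measure.prod.instIsAddHaarMeasure _ _

lemma cnorm_sq (w : ℂ × ℂ) : cnorm w ^ 2 = Complex.normSq w.1 + Complex.normSq w.2 := by
  rw [cnorm, Real.sq_sqrt (by positivity), Complex.sq_norm, Complex.sq_norm]

lemma cnorm_eq_zero {w : ℂ × ℂ} : cnorm w = 0 ↔ w = 0 := by
  rw [← pow_eq_zero_iff two_ne_zero, cnorm_sq,
    add_eq_zero_iff_of_nonneg (Complex.normSq_nonneg _) (Complex.normSq_nonneg _),
    Complex.normSq_eq_zero, Complex.normSq_eq_zero, Prod.ext_iff]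
  rfl

namespace SU2

instance : MeasurableSpace SU2 := borel SU2

instance : BorelSpace SU2 := ⟨rfl⟩

-- `U • w` is Mathlib's action of `2 × 2` matrices on `R × R`, restricted to `SU(2)`.
lemma smul_eq_su2Smul (U : SU2) (w : ℂ × ℂ) : U • w = su2Smul U w := by
  ext <;> simp [Submonoid.smul_def, Equiv.smul_def, su2Smul, mul_comm]

instance : ContinuousSMul SU2 (ℂ × ℂ) := by
  refine ⟨(Continuous.prodMk ?_ ?_).congr fun q => (smul_eq_su2Smul q.1 q.2).symm⟩ <;>
  · have hU (i j : Fin 2) :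
        Continuous fun q : SU2 × (ℂ × ℂ) => (q.1 : Matrix (Fin 2) (Fin 2) ℂ) i j :=
      (continuous_subtype_val.comp continuous_fst).matrix_elem i j
    exact ((hU _ 0).mul (continuous_fst.comp continuous_snd)).add
      ((hU _ 1).mul (continuous_snd.comp continuous_snd))

lemma cnorm_smul (U : SU2) (w : ℂ × ℂ) : cnorm (U • w) = cnorm w := by
  have hU (j k : Fin 2) := congrFun₂ (U.2.1.1 : star (U : Matrix (Fin 2) (Fin 2) ℂ) * U = 1) j k
  have h00 := hU 0 0
  have h01 := hU 0 1
  have h10 := hU 1 0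
  have h11 := hU 1 1
  simp only [Matrix.mul_apply, Matrix.star_apply, Fin.sum_univ_two, RCLike.star_def,
    Matrix.one_apply_eq, Matrix.one_apply_ne zero_ne_one, Matrix.one_apply_ne one_ne_zero]
    at h00 h01 h10 h11
  unfold cnorm
  congr 1
  apply Complex.ofReal_injective
  push_cast [smul_eq_su2Smul, su2Smul, Complex.sq_norm, ← Complex.mul_conj, map_add, map_mul]
  linear_combination (w.1 * conj w.1) * h00 + (w.2 * conj w.2) * h11
    + (w.2 * conj w.1) * h01 + (w.1 * conj w.2) * h10

lemma exists_smul_eq (w : ℂ × ℂ) : ∃ U : SU2, U • ((cnorm w : ℂ), (0 : ℂ)) = w := by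
  rcases eq_or_ne w 0 with rfl | hw
  · exact ⟨1, by simp [cnorm_eq_zero.mpr rfl]⟩
  have hwC : (cnorm w : ℂ) ≠ 0 := Complex.ofReal_ne_zero.mpr (cnorm_eq_zero.not.mpr hw)
  have hab : Complex.normSq (w.1 / cnorm w) + Complex.normSq (w.2 / cnorm w) = 1 := by
    rw [Complex.normSq_div, Complex.normSq_div, Complex.normSq_ofReal, ← add_div, ← cnorm_sq,
      ← sq, div_self (by simpa using hwC)]
  refine ⟨⟨_, Matrix.mem_specialUnitaryGroup_fin_two_of_normSq_add_normSq_eq_one hab⟩, ?_⟩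
  rw [smul_eq_su2Smul]
  ext <;> simp [su2Smul, div_mul_cancel₀ _ hwC]

lemma apply_eq_apply_cnorm_of_smul_invariant {Y : Type*} {q : ℂ × ℂ → Y}
    (hq : ∀ (U : SU2) w, q (U • w) = q w) (w : ℂ × ℂ) : q w = q ((cnorm w : ℂ), 0) := by
  obtain ⟨U, hU⟩ := exists_smul_eq w
  rw [← hU, hq, hU]

end SU2

theorem su2_ae_invariant_iff_ae_radial_general (p : ℂ × ℂ → ℝ) (hp0 : ∀ w, 0 ≤ p w)
    (hpm : Measurable p) :
    (∀ U : SU2, ∀ᵐ w : ℂ × ℂ ∂volume, p (su2Smul U w) = p w) ↔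
      ∃ f : ℝ → ℝ, Measurable f ∧ (∀ l, 0 ≤ l → 0 ≤ f l) ∧
        ∀ᵐ w : ℂ × ℂ ∂volume, p w = f (cnorm w) := by
  simp only [← SU2.smul_eq_su2Smul]
  constructor
  · intro hinv
    set q := orbitAverage (Measure.haarMeasure (⊤ : TopologicalSpace.PositiveCompacts SU2))
      fun w => ENNReal.ofReal (p w)
    have hq : q =ᵐ[volume] fun w => ENNReal.ofReal (p w) :=
      orbitAverage_ae_eq _ hpm.ennreal_ofReal fun U => by
        filter_upwards [hinv U] with w hw
        rw [hw]
    refine ⟨fun l => (q ((l : ℂ), 0)).toReal, ?_, fun _ _ => ENNReal.toReal_nonneg, ?_⟩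
    · exact ((measurable_orbitAverage _ hpm.ennreal_ofReal).comp
        (Complex.measurable_ofReal.prodMk measurable_const)).ennreal_toReal
    · filter_upwards [hq] with w hw
      rw [← SU2.apply_eq_apply_cnorm_of_smul_invariant (q := q) (orbitAverage_smul _ _) w, hw,
        ENNReal.toReal_ofReal (hp0 w)]
  · rintro ⟨f, -, -, hf⟩ U
    exact (DistribMulAction.quasiMeasurePreserving_smul volume U).ae_apply_eq_of_ae_eq_comp
      (SU2.cnorm_smul U) hf

/-- A measurable, integrable `p : ℂ² → [0,∞)` is a.e. invariant under `SU(2)` transformations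
iff there is a measurable `f : [0,∞) → [0,∞)` with `p w = f ‖w‖` for a.e. `w ∈ ℂ²`. -/
theorem su2_ae_invariant_iff_ae_radial (p : ℂ × ℂ → ℝ) (hp0 : ∀ w, 0 ≤ p w)
    (hpm : Measurable p) (hpi : Integrable p (volume : Measure (ℂ × ℂ))) :
    (∀ U : SU2, ∀ᵐ w : ℂ × ℂ ∂volume, p (su2Smul U w) = p w) ↔
      ∃ f : ℝ → ℝ, Measurable f ∧ (∀ l, 0 ≤ l → 0 ≤ f l) ∧
        ∀ᵐ w : ℂ × ℂ ∂volume, p w = f (cnorm w) :=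
  su2_ae_invariant_iff_ae_radial_general p hp0 hpm
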